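/- Let d ≥ K ≥ 2, λ_W > 0, λ̃_H > 0, and for each n ≥ 1 set λ_H := λ̃_H/n in the objective f(W,H) := (1/(2Kn))‖WH − Y_n‖_F² + (λ_W/2)‖W‖_F² + (λ_H/2)‖H‖_F², where Y_n = I_K ⊗ 1_nᵀ. Let (W*, H*) be a global minimizer of f for some n, so that H* = H̄ ⊗ 1_nᵀ for some H̄ ∈ ℝ^{d×K}. For each n, let H̃_n := H̄ ⊗ 1_nᵀ + E_n, where E_n ∈ ℝ^{d×Kn} has i.i.d. random entries with zero mean, variance σ_e², and finite fourth moment. Define Ŵ_n := argmin over W ∈ ℝ^{K×d} of (1/(2Kn))‖W·H̃_n − Y_n‖_F² + (λ_W/2)‖W‖_F². Then Ŵ_n converges almost surely, as n → ∞, to (1/(1 + σ_e²·K·√(λ̃_H/λ_W)))·W*. -/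

import Mathlib

open Matrix Finset MeasureTheory ProbabilityTheory Filter Topology

noncomputable section

/-- Squared Frobenius norm of a real matrix. -/
def frobSq {m n : Type*} [Fintype m] [Fintype n] (A : Matrix m n ℝ) : ℝ :=
  ∑ i, ∑ j, (A i j) ^ 2

/-!
At a collapsed minimiser `H* = H̄ ⊗ 1ᵀ` the two first-order conditions of the UFM objective read
`W*(H̄H̄ᵀ + Kλ_W I) = H̄ᵀ` and `W*ᵀ(W*H̄ − I) + Kλ̃_H H̄ = 0`. Together they give the balance
`λ_W W*ᵀW* = λ̃_H H̄H̄ᵀ`, after which `E = W*ᵀ − aH̄`, `a = √(λ̃_H/λ_W)`, satisfies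
`a H̄H̄ᵀE = −(1 + aKλ_W)E`; as `H̄H̄ᵀ` is positive semidefinite, `E = 0`, i.e. `W* = aH̄ᵀ`.

The ridge minimiser solves the normal equation `Ŵ_n A_n = B_n`, where
`A_n = (1/(2Kn)) H̃_nH̃_nᵀ + (λ_W/2) I` and `B_n = (1/(2Kn)) Y_nH̃_nᵀ`. The strong law of large
numbers, applied to the noise entries and to products of two entries in the same column, gives
`(1/n) E_nY_nᵀ → 0` and `(1/n) E_nE_nᵀ → Kσ_e² I` almost surely, so `A_n` and `B_n` converge to
`(1/(2K))(H̄H̄ᵀ + Kσ_e² I) + (λ_W/2) I` (invertible) and `(1/(2K)) H̄ᵀ`. By the first condition and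
`W* = aH̄ᵀ`, the matrix `W*/(1 + σ_e²Ka)` solves the limiting equation.
-/

section Frobenius

variable {m n p : Type*} [Fintype m] [Fintype n] [Fintype p]

theorem frobSq_eq_trace (A : Matrix m n ℝ) : frobSq A = (Aᵀ * A).trace := by
  simp only [frobSq, trace, Matrix.diag, mul_apply, transpose_apply, sq]
  exact Finset.sum_comm

theorem frobSq_nonneg (A : Matrix m n ℝ) : 0 ≤ frobSq A := by
  unfold frobSq; positivity

theorem frobSq_eq_zero_iff {A : Matrix m n ℝ} : frobSq A = 0 ↔ A = 0 := by
  rw [frobSq_eq_trace, ← conjTranspose_eq_transpose_of_trivial]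
  exact trace_conjTranspose_mul_self_eq_zero_iff

theorem frobSq_transpose (A : Matrix m n ℝ) : frobSq Aᵀ = frobSq A := by
  simp only [frobSq, transpose_apply]
  exact Finset.sum_comm

theorem frobSq_sub_smul (A B : Matrix m n ℝ) (t : ℝ) :
    frobSq (A - t • B) = frobSq A - 2 * t * (Aᵀ * B).trace + t ^ 2 * frobSq B := by
  have h : (Bᵀ * A).trace = (Aᵀ * B).trace := by
    rw [← trace_transpose, transpose_mul, transpose_transpose]
  simp only [frobSq_eq_trace, transpose_sub, transpose_smul, Matrix.sub_mul, Matrix.mul_sub,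
    Matrix.smul_mul, Matrix.mul_smul, trace_sub, trace_smul, smul_eq_mul, h]
  ring

end Frobenius

theorem eq_zero_of_forall_two_mul_le_sq_mul {x b : ℝ} (hb : 0 ≤ b)
    (h : ∀ t : ℝ, 2 * t * x ≤ t ^ 2 * b) : x = 0 := by
  obtain ⟨u, rfl⟩ : ∃ u, x = u * (b + 1) := ⟨x / (b + 1), by field_simp⟩
  have := h u
  have : u = 0 := by nlinarith [sq_nonneg u]
  simp [this]

section Ridge

variable {m n p : Type*} [Fintype m] [Fintype n] [Fintype p]

def ridgeObjective (r s : ℝ) (Y : Matrix m n ℝ) (H : Matrix p n ℝ) (W : Matrix m p ℝ) : ℝ :=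
  r * frobSq (W * H - Y) + s * frobSq W

theorem ridgeObjective_sub_smul (r s : ℝ) (Y : Matrix m n ℝ) (H : Matrix p n ℝ)
    (W G : Matrix m p ℝ) (t : ℝ) :
    ridgeObjective r s Y H (W - t • G) = ridgeObjective r s Y H W
      - 2 * t * ((r • ((W * H - Y) * Hᵀ) + s • W)ᵀ * G).trace
      + t ^ 2 * (r * frobSq (G * H) + s * frobSq G) := by
  have h : (W - t • G) * H - Y = (W * H - Y) - t • (G * H) := by
    rw [Matrix.sub_mul, Matrix.smul_mul]; abel
  have h' : ((W * H - Y)ᵀ * (G * H)).trace = (((W * H - Y) * Hᵀ)ᵀ * G).trace := by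
    rw [transpose_mul, transpose_transpose, ← Matrix.mul_assoc, trace_mul_comm, Matrix.mul_assoc]
  simp only [ridgeObjective, h, frobSq_sub_smul, h', transpose_add, transpose_smul,
    Matrix.add_mul, Matrix.smul_mul, trace_add, trace_smul, smul_eq_mul]
  ring

theorem ridgeObjective_gradient_eq_zero {r s : ℝ} (hr : 0 ≤ r) (hs : 0 ≤ s) {Y : Matrix m n ℝ}
    {H : Matrix p n ℝ} {W : Matrix m p ℝ}
    (hmin : ∀ V, ridgeObjective r s Y H W ≤ ridgeObjective r s Y H V) :
    r • ((W * H - Y) * Hᵀ) + s • W = 0 := by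
  -- along `W - t • G` the objective changes by `-2t‖G‖² + O(t²)`
  set G := r • ((W * H - Y) * Hᵀ) + s • W
  rw [← frobSq_eq_zero_iff]
  refine eq_zero_of_forall_two_mul_le_sq_mul (b := r * frobSq (G * H) + s * frobSq G)
    (by have := frobSq_nonneg (G * H); have := frobSq_nonneg G; positivity) fun t => ?_
  have := hmin (W - t • G)
  rw [ridgeObjective_sub_smul, ← frobSq_eq_trace] at this
  linarith

theorem ridgeObjective_mul_eq [DecidableEq p] {r s : ℝ} (hr : 0 ≤ r) (hs : 0 ≤ s)
    {Y : Matrix m n ℝ} {H : Matrix p n ℝ} {W : Matrix m p ℝ}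
    (hmin : ∀ V, ridgeObjective r s Y H W ≤ ridgeObjective r s Y H V) :
    W * (r • (H * Hᵀ) + s • 1) = r • (Y * Hᵀ) := by
  have h := ridgeObjective_gradient_eq_zero hr hs hmin
  rw [Matrix.sub_mul, Matrix.mul_assoc] at h
  rw [Matrix.mul_add, Matrix.mul_smul, Matrix.mul_smul, Matrix.mul_one]
  linear_combination (norm := module) h

theorem ridgeObjective_transpose (r s : ℝ) (Y : Matrix m n ℝ) (W : Matrix m p ℝ)
    (V : Matrix n p ℝ) :
    ridgeObjective r s Yᵀ Wᵀ V = r * frobSq (W * Vᵀ - Y) + s * frobSq Vᵀ := by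
  rw [ridgeObjective, ← frobSq_transpose (V * Wᵀ - Yᵀ), ← frobSq_transpose V, transpose_sub,
    transpose_mul, transpose_transpose, transpose_transpose]

theorem right_ridgeObjective_gradient_eq_zero {r s : ℝ} (hr : 0 ≤ r) (hs : 0 ≤ s)
    {Y : Matrix m n ℝ} {W : Matrix m p ℝ} {H : Matrix p n ℝ}
    (hmin : ∀ V : Matrix p n ℝ,
      r * frobSq (W * H - Y) + s * frobSq H ≤ r * frobSq (W * V - Y) + s * frobSq V) :
    r • (Wᵀ * (W * H - Y)) + s • H = 0 := by
  have h := ridgeObjective_gradient_eq_zero hr hs (Y := Yᵀ) (H := Wᵀ) (W := Hᵀ) fun V => by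
    rw [ridgeObjective_transpose, ridgeObjective_transpose, transpose_transpose]
    exact hmin Vᵀ
  rw [← transpose_mul, ← transpose_sub, ← transpose_mul, ← transpose_smul, ← transpose_smul,
    ← transpose_add, transpose_eq_zero] at h
  exact h

end Ridge

section Stationary

variable {m n p : Type*} [Fintype m] [Fintype n] [Fintype p]

theorem eq_zero_of_smul_mul_transpose_mul_add_smul_eq_zero {s t : ℝ} (hs : 0 ≤ s) (ht : 0 < t)
    {H : Matrix m n ℝ} {E : Matrix m p ℝ} (h : s • (H * Hᵀ * E) + t • E = 0) : E = 0 := by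
  have h' := congrArg (fun X => (Eᵀ * X).trace) h
  have hgram : (Eᵀ * (H * Hᵀ * E)).trace = frobSq (Hᵀ * E) := by
    rw [frobSq_eq_trace, transpose_mul, transpose_transpose, Matrix.mul_assoc, Matrix.mul_assoc]
  simp only [Matrix.mul_add, Matrix.mul_smul, trace_add, trace_smul, smul_eq_mul, hgram,
    ← frobSq_eq_trace, Matrix.mul_zero, trace_zero] at h'
  rw [← frobSq_eq_zero_iff]
  nlinarith [frobSq_nonneg (Hᵀ * E), frobSq_nonneg E]

theorem eq_smul_transpose_of_stationary [DecidableEq n] {c c' a : ℝ} (hc : 0 < c) (ha : 0 < a)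
    (hc' : c' = a ^ 2 * c) {W : Matrix n m ℝ} {H : Matrix m n ℝ}
    (h₁ : W * (H * Hᵀ) + c • W = Hᵀ) (h₂ : Wᵀ * (W * H - 1) + c' • H = 0) :
    W = a • Hᵀ := by
  have hbal : c • (Wᵀ * W) = c' • (H * Hᵀ) := by
    have e₁ := congrArg (Wᵀ * ·) h₁
    have e₂ := congrArg (· * Hᵀ) h₂
    simp only [Matrix.mul_add, Matrix.add_mul, Matrix.mul_sub, Matrix.sub_mul, Matrix.mul_smul,
      Matrix.smul_mul, Matrix.mul_one, Matrix.zero_mul, Matrix.mul_assoc] at e₁ e₂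
    linear_combination (norm := module) e₁ - e₂
  have hT : H * Hᵀ * Wᵀ + c • Wᵀ = H := by
    simpa only [transpose_add, transpose_mul, transpose_smul, transpose_transpose,
      Matrix.mul_assoc] using congrArg transpose h₁
  have hU : c' • (H * Hᵀ * H) = c • Wᵀ - (c * c') • H := by
    have e₁ := congrArg (· * H) hbal
    have e₂ := congrArg (c • ·) h₂
    simp only [Matrix.mul_sub, Matrix.smul_mul, Matrix.mul_one, Matrix.mul_assoc, smul_add,
      smul_sub, smul_zero] at e₁ e₂ ⊢
    linear_combination (norm := module) e₂ - e₁
  have hE : a • (H * Hᵀ * (Wᵀ - a • H)) + (1 + a * c) • (Wᵀ - a • H) = 0 := by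
    apply smul_right_injective _ hc.ne'
    subst hc'
    simp only [Matrix.mul_sub, Matrix.mul_smul, smul_zero] at hU ⊢
    linear_combination (norm := module) (a * c) • hT - hU
  have := eq_zero_of_smul_mul_transpose_mul_add_smul_eq_zero ha.le (by positivity) hE
  rw [sub_eq_zero] at this
  rw [← transpose_transpose W, this, transpose_smul]

end Stationary

/-- `Y_n = I_K ⊗ 1_nᵀ`, with columns indexed by pairs (class, sample). -/
def oneHot (κ ι : Type*) [DecidableEq κ] : Matrix κ (κ × ι) ℝ :=
  of fun k p => if p.1 = k then 1 else 0

section oneHot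

variable {κ ι : Type*} [Fintype κ] [DecidableEq κ]

@[simp]
theorem mul_oneHot_apply {m : Type*} (A : Matrix m κ ℝ) (j : m) (k : κ) (i : ι) :
    (A * oneHot κ ι) j (k, i) = A j k := by
  simp [oneHot, mul_apply]

theorem eq_zero_of_mul_oneHot_eq_zero [Nonempty ι] {m : Type*} {A : Matrix m κ ℝ}
    (h : A * oneHot κ ι = 0) : A = 0 := by
  ext j k
  simpa using congrFun (congrFun h j) (k, Classical.arbitrary ι)

variable [Fintype ι]

theorem oneHot_mul_transpose : oneHot κ ι * (oneHot κ ι)ᵀ = (Fintype.card ι : ℝ) • 1 := by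
  ext k k'
  by_cases h : k = k' <;>
    simp [oneHot, mul_apply, Fintype.sum_prod_type, one_apply, h, eq_comm]

theorem mul_oneHot_mul_transpose {m : Type*} (A : Matrix m κ ℝ) :
    A * oneHot κ ι * (oneHot κ ι)ᵀ = (Fintype.card ι : ℝ) • A := by
  rw [Matrix.mul_assoc, oneHot_mul_transpose, Matrix.mul_smul, Matrix.mul_one]

end oneHot

def ufmObjective (K d n : ℕ) (lW lH : ℝ) (W : Matrix (Fin K) (Fin d) ℝ)
    (H : Matrix (Fin d) (Fin K × Fin n) ℝ) : ℝ :=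
  ridgeObjective (1 / (2 * K * n)) (lW / 2) (oneHot (Fin K) (Fin n)) H W + lH / n / 2 * frobSq H

theorem ufmObjective_stationary_left_of_collapsed {K d n : ℕ} (hK : 0 < K) (hn : 0 < n)
    {lW lH : ℝ} (hlW : 0 ≤ lW) {W : Matrix (Fin K) (Fin d) ℝ} {Hbar : Matrix (Fin d) (Fin K) ℝ}
    (hmin : ∀ W', ufmObjective K d n lW lH W (Hbar * oneHot (Fin K) (Fin n)) ≤
      ufmObjective K d n lW lH W' (Hbar * oneHot (Fin K) (Fin n))) :
    W * (Hbar * Hbarᵀ) + (K * lW) • W = Hbarᵀ := by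
  have h := ridgeObjective_gradient_eq_zero (r := 1 / (2 * K * n)) (s := lW / 2)
    (Y := oneHot (Fin K) (Fin n)) (H := Hbar * oneHot (Fin K) (Fin n)) (W := W)
    (by positivity) (by positivity) fun V => by
      have := hmin V
      simp only [ufmObjective] at this
      linear_combination this
  simp only [transpose_mul, ← Matrix.mul_assoc, Matrix.sub_mul, mul_oneHot_mul_transpose,
    oneHot_mul_transpose, Fintype.card_fin, Matrix.smul_mul, Matrix.one_mul] at h
  rw [← Matrix.mul_assoc]
  have hK' : (K : ℝ) ≠ 0 := by positivity
  have hn' : (n : ℝ) ≠ 0 := by positivity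
  linear_combination (norm := skip) (2 * K : ℝ) • h
  match_scalars <;> field_simp <;> ring

theorem ufmObjective_stationary_right_of_collapsed {K d n : ℕ} (hK : 0 < K) (hn : 0 < n)
    {lW lH : ℝ} (hlH : 0 ≤ lH) {W : Matrix (Fin K) (Fin d) ℝ} {Hbar : Matrix (Fin d) (Fin K) ℝ}
    (hmin : ∀ H', ufmObjective K d n lW lH W (Hbar * oneHot (Fin K) (Fin n)) ≤
      ufmObjective K d n lW lH W H') :
    Wᵀ * (W * Hbar - 1) + (K * lH) • Hbar = 0 := by
  have h := right_ridgeObjective_gradient_eq_zero (r := 1 / (2 * K * n)) (s := lH / n / 2)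
    (Y := oneHot (Fin K) (Fin n)) (W := W) (H := Hbar * oneHot (Fin K) (Fin n))
    (by positivity) (by positivity) fun V => by
      have := hmin V
      simp only [ufmObjective, ridgeObjective] at this
      linear_combination this
  replace h : ((1 / (2 * K * n) : ℝ) • (Wᵀ * (W * Hbar - 1)) + (lH / n / 2) • Hbar) *
      oneHot (Fin K) (Fin n) = 0 := by
    rwa [Matrix.add_mul, Matrix.smul_mul, Matrix.smul_mul, Matrix.mul_assoc, Matrix.sub_mul,
      Matrix.one_mul, Matrix.mul_assoc]
  have : Nonempty (Fin n) := ⟨⟨0, hn⟩⟩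
  replace h := eq_zero_of_mul_oneHot_eq_zero h
  have hK' : (K : ℝ) ≠ 0 := by positivity
  have hn' : (n : ℝ) ≠ 0 := by positivity
  linear_combination (norm := skip) (2 * K * n : ℝ) • h
  match_scalars <;> field_simp <;> ring

section StrongLaw

variable {Ω ι : Type*} [MeasurableSpace Ω] {μ : Measure Ω} {e : ι → Ω → ℝ}

theorem ProbabilityTheory.iIndepFun.ae_tendsto_average (hindep : iIndepFun e μ) {p : ℕ → ι}
    (hp : Function.Injective p) (hident : ∀ i, IdentDistrib (e (p i)) (e (p 0)) μ μ)
    (hint : Integrable (e (p 0)) μ) :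
    ∀ᵐ ω ∂μ, Tendsto (fun n : ℕ => (∑ i ∈ range n, e (p i) ω) / n) atTop
      (𝓝 (∫ ω, e (p 0) ω ∂μ)) :=
  strong_law_ae_real (fun i => e (p i)) hint (fun _ _ hij => hindep.indepFun (hp.ne hij)) hident

theorem ProbabilityTheory.iIndepFun.ae_tendsto_average_mul (hmeas : ∀ p, Measurable (e p))
    (hindep : iIndepFun e μ) {p q : ℕ → ι} (hp : Function.Injective p)
    (hq : Function.Injective q) (hpq : ∀ i j, p i ≠ q j)
    (hident_p : ∀ i, IdentDistrib (e (p i)) (e (p 0)) μ μ)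
    (hident_q : ∀ i, IdentDistrib (e (q i)) (e (q 0)) μ μ)
    (hint_p : Integrable (e (p 0)) μ) (hint_q : Integrable (e (q 0)) μ) :
    ∀ᵐ ω ∂μ, Tendsto (fun n : ℕ => (∑ i ∈ range n, e (p i) ω * e (q i) ω) / n) atTop
      (𝓝 ((∫ ω, e (p 0) ω ∂μ) * ∫ ω, e (q 0) ω ∂μ)) := by
  have := hindep.isProbabilityMeasure
  have hpair : ∀ i, IndepFun (e (p i)) (e (q i)) μ := fun i => hindep.indepFun (hpq i i)
  have h := strong_law_ae_real (fun i ω => e (p i) ω * e (q i) ω)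
    ((hpair 0).integrable_mul hint_p hint_q)
    (fun i j hij => (hindep.indepFun_prodMk_prodMk hmeas (p i) (q i) (p j) (q j) (hp.ne hij)
      (hpq i j) (hpq j i).symm (hq.ne hij)).comp measurable_mul measurable_mul)
    (fun i => ((hident_p i).prodMk (hident_q i) (hpair i) (hpair 0)).comp measurable_mul)
  rwa [(hpair 0).integral_fun_mul_eq_mul_integral (hmeas _).aestronglyMeasurable
    (hmeas _).aestronglyMeasurable] at h

end StrongLaw

section Noise

variable {Ω m κ : Type*} {e : m × κ × ℕ → Ω → ℝ}

/-- The noise block `E_n`: the samples `i < n` of the noise array. -/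
def noiseMatrix (e : m × κ × ℕ → Ω → ℝ) (n : ℕ) (ω : Ω) : Matrix m (κ × Fin n) ℝ :=
  of fun j p => e (j, p.1, p.2) ω

theorem noiseMatrix_mul_oneHot_transpose_apply [Fintype κ] [DecidableEq κ] (n : ℕ) (ω : Ω)
    (j : m) (k : κ) :
    (noiseMatrix e n ω * (oneHot κ (Fin n))ᵀ) j k = ∑ i ∈ range n, e (j, k, i) ω := by
  simp [noiseMatrix, oneHot, mul_apply, Fintype.sum_prod_type, Fin.sum_univ_eq_sum_range
    (fun i => e (j, k, i) ω)]

theorem noiseMatrix_mul_transpose_apply [Fintype κ] (n : ℕ) (ω : Ω) (j j' : m) :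
    (noiseMatrix e n ω * (noiseMatrix e n ω)ᵀ) j j' =
      ∑ k, ∑ i ∈ range n, e (j, k, i) ω * e (j', k, i) ω := by
  simp only [noiseMatrix, mul_apply, transpose_apply, of_apply, Fintype.sum_prod_type]
  exact Finset.sum_congr rfl fun k _ =>
    Fin.sum_univ_eq_sum_range (fun i => e (j, k, i) ω * e (j', k, i) ω) n

variable [MeasurableSpace Ω] {μ : Measure Ω}

theorem ae_tendsto_average_noise_mul [DecidableEq m] {σ : ℝ} (hmeas : ∀ p, Measurable (e p))
    (hindep : iIndepFun e μ) (hident : ∀ p q, IdentDistrib (e p) (e q) μ μ)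
    (hL2 : ∀ p, MemLp (e p) 2 μ) (hmean : ∀ p, ∫ ω, e p ω ∂μ = 0)
    (hvar : ∀ p, ∫ ω, e p ω ^ 2 ∂μ = σ ^ 2) (j j' : m) (k : κ) :
    ∀ᵐ ω ∂μ, Tendsto (fun n : ℕ => (∑ i ∈ range n, e (j, k, i) ω * e (j', k, i) ω) / n) atTop
      (𝓝 (if j = j' then σ ^ 2 else 0)) := by
  have hinj : ∀ l : m, Function.Injective fun i : ℕ => (l, k, i) := fun _ _ _ h => by
    simpa using h
  have := hindep.isProbabilityMeasure
  by_cases hj : j = j'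
  · subst hj
    have hsq := (hindep.comp (fun _ x => x ^ 2) fun _ => measurable_id.pow_const 2)
      |>.ae_tendsto_average (hinj j) (fun _ => (hident _ _).comp (measurable_id.pow_const 2))
        (hL2 _).integrable_sq
    simp only [Function.comp_apply, hvar] at hsq
    simpa only [if_true, sq] using hsq
  · have hprod := hindep.ae_tendsto_average_mul hmeas (hinj j) (hinj j')
      (fun _ _ => by simp [hj]) (fun _ => hident _ _) (fun _ => hident _ _)
      ((hL2 _).integrable one_le_two) ((hL2 _).integrable one_le_two)
    simpa only [hmean, mul_zero, if_neg hj] using hprod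

theorem ae_tendsto_noiseMatrix_mul_oneHot_transpose [Finite m] [Fintype κ] [DecidableEq κ]
    (hindep : iIndepFun e μ) (hident : ∀ p q, IdentDistrib (e p) (e q) μ μ)
    (hint : ∀ p, Integrable (e p) μ) (hmean : ∀ p, ∫ ω, e p ω ∂μ = 0) :
    ∀ᵐ ω ∂μ, Tendsto (fun n : ℕ => (n : ℝ)⁻¹ • (noiseMatrix e n ω * (oneHot κ (Fin n))ᵀ))
      atTop (𝓝 0) := by
  have h : ∀ j k, ∀ᵐ ω ∂μ, Tendsto (fun n : ℕ => (∑ i ∈ range n, e (j, k, i) ω) / n) atTop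
      (𝓝 0) := fun j k => by
    simpa only [hmean] using hindep.ae_tendsto_average (p := fun i => (j, k, i))
      (fun i i' h => by simpa using h) (fun _ => hident _ _) (hint _)
  filter_upwards [ae_all_iff.2 fun j => ae_all_iff.2 (h j)] with ω hω
  refine tendsto_pi_nhds.2 fun j => tendsto_pi_nhds.2 fun k => ?_
  simpa [noiseMatrix_mul_oneHot_transpose_apply, div_eq_inv_mul] using hω j k

theorem ae_tendsto_noiseMatrix_mul_transpose [Finite m] [DecidableEq m] [Fintype κ] {σ : ℝ}
    (hmeas : ∀ p, Measurable (e p))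
    (hindep : iIndepFun e μ) (hident : ∀ p q, IdentDistrib (e p) (e q) μ μ)
    (hL2 : ∀ p, MemLp (e p) 2 μ) (hmean : ∀ p, ∫ ω, e p ω ∂μ = 0)
    (hvar : ∀ p, ∫ ω, e p ω ^ 2 ∂μ = σ ^ 2) :
    ∀ᵐ ω ∂μ, Tendsto (fun n : ℕ => (n : ℝ)⁻¹ • (noiseMatrix e n ω * (noiseMatrix e n ω)ᵀ))
      atTop (𝓝 ((Fintype.card κ * σ ^ 2 : ℝ) • 1)) := by
  have h := ae_tendsto_average_noise_mul hmeas hindep hident hL2 hmean hvar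
  filter_upwards [ae_all_iff.2 fun j => ae_all_iff.2 fun j' => ae_all_iff.2 (h j j')] with ω hω
  refine tendsto_pi_nhds.2 fun j => tendsto_pi_nhds.2 fun j' => ?_
  have hsum := tendsto_finsetSum (univ : Finset κ) fun k _ => hω j j' k
  by_cases hj : j = j' <;>
    simpa [noiseMatrix_mul_transpose_apply, Finset.sum_div, div_eq_inv_mul, Finset.mul_sum, hj]
      using hsum

end Noise

theorem tendsto_of_eventually_mul_eq {α m p : Type*} [Fintype p] [DecidableEq p] {l : Filter α}
    {W : α → Matrix m p ℝ} {A : α → Matrix p p ℝ} {B : α → Matrix m p ℝ}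
    {W' : Matrix m p ℝ} {A' : Matrix p p ℝ} {B' : Matrix m p ℝ}
    (hW : ∀ᶠ x in l, W x * A x = B x) (hA : Tendsto A l (𝓝 A')) (hB : Tendsto B l (𝓝 B'))
    (hdet : A'.det ≠ 0) (hlim : W' * A' = B') : Tendsto W l (𝓝 W') := by
  have hinv : Tendsto (fun x => (A x)⁻¹) l (𝓝 A'⁻¹) :=
    (continuousAt_matrix_inv _ (by simpa [Ring.inverse_eq_inv'] using continuousAt_inv₀ hdet)
      ).tendsto.comp hA
  have hdetA : ∀ᶠ x in l, (A x).det ≠ 0 :=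
    ((continuous_id.matrix_det.tendsto _).comp hA).eventually_ne hdet
  rw [show W' = B' * A'⁻¹ by
    rw [← hlim, mul_nonsing_inv_cancel_right _ _ (isUnit_iff_ne_zero.2 hdet)]]
  refine (((continuous_fst.matrix_mul continuous_snd).tendsto (B', A'⁻¹)).comp
    (hB.prodMk_nhds hinv)).congr' ?_
  filter_upwards [hW, hdetA] with x hx hdx
  simp [← hx, mul_nonsing_inv_cancel_right _ _ (isUnit_iff_ne_zero.2 hdx)]

section Perturbed

variable {m κ : Type*} [Fintype κ] [DecidableEq κ] {Hbar : Matrix m κ ℝ}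
  {E : (n : ℕ) → Matrix m (κ × Fin n) ℝ}

theorem tendsto_inv_smul_perturbed_gram {T : Matrix m m ℝ}
    (hS : Tendsto (fun n : ℕ => (n : ℝ)⁻¹ • (E n * (oneHot κ (Fin n))ᵀ)) atTop (𝓝 0))
    (hT : Tendsto (fun n : ℕ => (n : ℝ)⁻¹ • (E n * (E n)ᵀ)) atTop (𝓝 T)) :
    Tendsto (fun n : ℕ => (n : ℝ)⁻¹ •
      ((Hbar * oneHot κ (Fin n) + E n) * (Hbar * oneHot κ (Fin n) + E n)ᵀ)) atTop
      (𝓝 (Hbar * Hbarᵀ + T)) := by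
  set S := fun n : ℕ => (n : ℝ)⁻¹ • (E n * (oneHot κ (Fin n))ᵀ)
  have hl : Tendsto (fun n => Hbar * (S n)ᵀ) atTop (𝓝 0) := by
    simpa [Function.comp_def] using
      ((continuous_const.matrix_mul continuous_id.matrix_transpose).tendsto 0).comp hS
  have hr : Tendsto (fun n => S n * Hbarᵀ) atTop (𝓝 0) := by
    simpa [Function.comp_def] using ((continuous_id.matrix_mul continuous_const).tendsto 0).comp hS
  have hlim : Tendsto (fun n : ℕ => Hbar * Hbarᵀ + Hbar * (S n)ᵀ + S n * Hbarᵀ +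
      (n : ℝ)⁻¹ • (E n * (E n)ᵀ)) atTop (𝓝 (Hbar * Hbarᵀ + T)) := by
    simpa using ((tendsto_const_nhds.add hl).add hr).add hT
  refine hlim.congr' ?_
  filter_upwards [eventually_ne_atTop 0] with n hn
  have hn' : (n : ℝ) ≠ 0 := by exact_mod_cast hn
  simp only [S, transpose_add, transpose_mul, transpose_smul, transpose_transpose, Matrix.add_mul,
    Matrix.mul_add, Matrix.mul_smul, Matrix.smul_mul, ← Matrix.mul_assoc, mul_oneHot_mul_transpose,
    Fintype.card_fin, smul_add, smul_smul, inv_mul_cancel₀ hn', one_smul]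
  abel

theorem tendsto_inv_smul_oneHot_mul_perturbed_transpose
    (hS : Tendsto (fun n : ℕ => (n : ℝ)⁻¹ • (E n * (oneHot κ (Fin n))ᵀ)) atTop (𝓝 0)) :
    Tendsto (fun n : ℕ => (n : ℝ)⁻¹ • (oneHot κ (Fin n) * (Hbar * oneHot κ (Fin n) + E n)ᵀ))
      atTop (𝓝 Hbarᵀ) := by
  have hlim : Tendsto (fun n : ℕ => Hbarᵀ + ((n : ℝ)⁻¹ • (E n * (oneHot κ (Fin n))ᵀ))ᵀ) atTop
      (𝓝 Hbarᵀ) := by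
    simpa using tendsto_const_nhds.add (continuous_id.matrix_transpose.tendsto 0 |>.comp hS)
  refine hlim.congr' ?_
  filter_upwards [eventually_ne_atTop 0] with n hn
  have hn' : (n : ℝ) ≠ 0 := by exact_mod_cast hn
  rw [transpose_add, transpose_mul, Matrix.mul_add, ← Matrix.mul_assoc, oneHot_mul_transpose,
    Fintype.card_fin, Matrix.smul_mul, Matrix.one_mul, smul_add, smul_smul, inv_mul_cancel₀ hn',
    one_smul, transpose_smul, transpose_mul, transpose_transpose]

theorem tendsto_ridgeObjective_minimizer [Fintype m] [DecidableEq m] {c s : ℝ} (hc : 0 < c)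
    (hs : 0 < s) {T : Matrix m m ℝ} (hTpsd : T.PosSemidef) {W : ℕ → Matrix κ m ℝ}
    {W' : Matrix κ m ℝ}
    (hmin : ∀ (n : ℕ) V,
      ridgeObjective (1 / (c * n)) s (oneHot κ (Fin n)) (Hbar * oneHot κ (Fin n) + E n) (W n) ≤
        ridgeObjective (1 / (c * n)) s (oneHot κ (Fin n)) (Hbar * oneHot κ (Fin n) + E n) V)
    (hS : Tendsto (fun n : ℕ => (n : ℝ)⁻¹ • (E n * (oneHot κ (Fin n))ᵀ)) atTop (𝓝 0))
    (hT : Tendsto (fun n : ℕ => (n : ℝ)⁻¹ • (E n * (E n)ᵀ)) atTop (𝓝 T))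
    (hlim : W' * ((1 / c) • (Hbar * Hbarᵀ + T) + s • 1) = (1 / c) • Hbarᵀ) :
    Tendsto W atTop (𝓝 W') := by
  have hscale : ∀ n : ℕ, (1 / (c * n) : ℝ) = 1 / c * (n : ℝ)⁻¹ := fun n => by ring
  refine tendsto_of_eventually_mul_eq
    (.of_forall fun n => ridgeObjective_mul_eq (by positivity) hs.le (hmin n)) ?_ ?_ ?_ hlim
  · simpa only [hscale, ← smul_smul] using
      ((tendsto_inv_smul_perturbed_gram hS hT).const_smul (1 / c)).add_const (s • 1)
  · simpa only [hscale, ← smul_smul] using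
      (tendsto_inv_smul_oneHot_mul_perturbed_transpose hS).const_smul (1 / c)
  · have hgram : (Hbar * Hbarᵀ).PosSemidef := by
      simpa only [conjTranspose_eq_transpose_of_trivial] using
        posSemidef_self_mul_conjTranspose Hbar
    exact (PosDef.posSemidef_add ((hgram.add hTpsd).smul (by positivity))
      (PosDef.one.smul hs)).det_pos.ne'

end Perturbed

theorem one_div_one_add_smul_mul_eq {m κ : Type*} [Fintype m] [Fintype κ] [DecidableEq m]
    {a σ K lW : ℝ} (hK : K ≠ 0) (hden : 1 + σ ^ 2 * K * a ≠ 0) {W : Matrix κ m ℝ} {H : Matrix m κ ℝ}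
    (h₁ : W * (H * Hᵀ) + (K * lW) • W = Hᵀ) (hW : W = a • Hᵀ) :
    ((1 / (1 + σ ^ 2 * K * a)) • W) * ((1 / (2 * K)) • (H * Hᵀ + (K * σ ^ 2) • 1) + (lW / 2) • 1)
      = (1 / (2 * K)) • Hᵀ := by
  subst hW
  -- the denominator in the form `field_simp` produces
  have hden' : 1 + K * σ ^ 2 * a ≠ 0 := by rwa [mul_comm K]
  simp only [Matrix.smul_mul, Matrix.mul_add, Matrix.mul_smul, Matrix.mul_one] at h₁ ⊢
  linear_combination (norm := skip) (1 / (2 * K * (1 + σ ^ 2 * K * a))) • h₁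
  match_scalars <;> field_simp <;> ring

theorem memLp_two_of_integrable_pow_four {Ω : Type*} [MeasurableSpace Ω] {μ : Measure Ω}
    [IsFiniteMeasure μ] {f : Ω → ℝ} (hf : AEStronglyMeasurable f μ)
    (h : Integrable (fun ω => f ω ^ 4) μ) : MemLp f 2 μ := by
  have hsq : MemLp (fun ω => f ω ^ 2) 2 μ :=
    (memLp_two_iff_integrable_sq (hf.pow 2)).2 (by simpa only [Pi.pow_apply, ← pow_mul] using h)
  exact (memLp_two_iff_integrable_sq hf).2 (hsq.integrable one_le_two)

theorem ridge_weights_converge_to_scaled_optimal_general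
    (K d : ℕ) (hK : 2 ≤ K)
    (lW ltH : ℝ) (hlW : 0 < lW) (hltH : 0 < ltH)
    (σe : ℝ)
    (Ω : Type*) [MeasurableSpace Ω] (μ : Measure Ω) [IsProbabilityMeasure μ]
    -- the infinite array of i.i.d. noise entries
    (e : Fin d × Fin K × ℕ → Ω → ℝ)
    (hmeas : ∀ p, Measurable (e p))
    (hindep : iIndepFun e μ)
    (hident : ∀ p q, IdentDistrib (e p) (e q) μ μ)
    (hmean : ∀ p, ∫ ω, e p ω ∂μ = 0)
    (hvar : ∀ p, ∫ ω, (e p ω) ^ 2 ∂μ = σe ^ 2)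
    (hmom4 : ∀ p, Integrable (fun ω => (e p ω) ^ 4) μ)
    -- a global minimizer of the UFM objective for some n₀ (with λ_H = λ̃_H/n₀)
    (n₀ : ℕ) (hn₀ : 1 ≤ n₀)
    (f : Matrix (Fin K) (Fin d) ℝ → Matrix (Fin d) (Fin K × Fin n₀) ℝ → ℝ)
    (hf : ∀ W H, f W H =
      1 / (2 * (K : ℝ) * (n₀ : ℝ)) *
          frobSq (W * H - Matrix.of (fun k (p : Fin K × Fin n₀) =>
            if p.1 = k then (1 : ℝ) else 0))
        + lW / 2 * frobSq W + (ltH / (n₀ : ℝ)) / 2 * frobSq H)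
    (Ws : Matrix (Fin K) (Fin d) ℝ) (Hs : Matrix (Fin d) (Fin K × Fin n₀) ℝ)
    (hmin : ∀ W H, f Ws Hs ≤ f W H)
    (Hbar : Matrix (Fin d) (Fin K) ℝ)
    (hHs : ∀ (j : Fin d) (k : Fin K) (i : Fin n₀), Hs j (k, i) = Hbar j k)
    -- the perturbed features H̃_n = H̄ ⊗ 1_nᵀ + E_n for every n
    (Htil : (n : ℕ) → Ω → Matrix (Fin d) (Fin K × Fin n) ℝ)
    (hHtil : ∀ n ω (j : Fin d) (k : Fin K) (i : Fin n),
      Htil n ω j (k, i) = Hbar j k + e (j, k, (i : ℕ)) ω)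
    -- the ridge objective and its minimizer Ŵ_n for every n
    (φ : (n : ℕ) → Ω → Matrix (Fin K) (Fin d) ℝ → ℝ)
    (hφ : ∀ n ω W, φ n ω W =
      1 / (2 * (K : ℝ) * (n : ℝ)) *
          frobSq (W * Htil n ω - Matrix.of (fun k (p : Fin K × Fin n) =>
            if p.1 = k then (1 : ℝ) else 0))
        + lW / 2 * frobSq W)
    (What : (n : ℕ) → Ω → Matrix (Fin K) (Fin d) ℝ)
    (hWhat : ∀ n ω W, φ n ω (What n ω) ≤ φ n ω W) :
    ∀ᵐ ω ∂μ, Tendsto (fun n => What n ω) atTop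
      (nhds ((1 / (1 + σe ^ 2 * (K : ℝ) * Real.sqrt (ltH / lW))) • Ws)) := by
  have hL2 p : MemLp (e p) 2 μ :=
    memLp_two_of_integrable_pow_four (hmeas p).aestronglyMeasurable (hmom4 p)
  have hK₀ : 0 < K := by omega
  have hHs' : Hs = Hbar * oneHot (Fin K) (Fin n₀) := by ext j ⟨k, i⟩; rw [hHs, mul_oneHot_apply]
  have hmin' W H : ufmObjective K d n₀ lW ltH Ws (Hbar * oneHot (Fin K) (Fin n₀)) ≤
      ufmObjective K d n₀ lW ltH W H := by
    simpa only [hf, hHs', ufmObjective, ridgeObjective, oneHot] using hmin W H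
  have h₁ := ufmObjective_stationary_left_of_collapsed hK₀ hn₀ hlW.le fun W => hmin' W _
  have h₂ := ufmObjective_stationary_right_of_collapsed hK₀ hn₀ hltH.le (hmin' Ws)
  have hWs := eq_smul_transpose_of_stationary (a := √(ltH / lW)) (by positivity)
    (Real.sqrt_pos.2 (by positivity)) (by rw [Real.sq_sqrt (by positivity)]; field_simp) h₁ h₂
  have hHtil' n ω : Htil n ω = Hbar * oneHot (Fin K) (Fin n) + noiseMatrix e n ω := by
    ext j ⟨k, i⟩; simp [hHtil, noiseMatrix]
  filter_upwards [ae_tendsto_noiseMatrix_mul_oneHot_transpose hindep hident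
      (fun p => (hL2 p).integrable one_le_two) hmean,
    ae_tendsto_noiseMatrix_mul_transpose hmeas hindep hident hL2 hmean hvar]
    with ω hS hT
  rw [Fintype.card_fin] at hT
  refine tendsto_ridgeObjective_minimizer (c := 2 * K) (s := lW / 2) (by positivity)
    (by positivity) (PosSemidef.one.smul (by positivity))
    (fun n V => by simpa only [hφ, hHtil', ridgeObjective, oneHot] using hWhat n ω V) hS hT ?_
  exact one_div_one_add_smul_mul_eq (by positivity) (by positivity) h₁ hWs

/-- **Theorem 5** (asymptotics of ridge weights for fixed perturbed collapsed features).
With `λ_H = λ̃_H/n`, let `(W*, H*)` be a global minimizer of the bias-free regularized-MSE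
UFM objective for some `n₀`, so `H* = H̄ ⊗ 1_{n₀}ᵀ`.  For each `n`, let
`H̃_n = H̄ ⊗ 1_nᵀ + E_n` with i.i.d. zero-mean, variance-`σ_e²`, finite-fourth-moment
entries, and let `Ŵ_n` be the minimizer of
`W ↦ (1/(2Kn))‖WH̃_n − Y_n‖_F² + (λ_W/2)‖W‖_F²`.
Then almost surely `Ŵ_n → (1/(1 + σ_e²K√(λ̃_H/λ_W)))·W*` as `n → ∞`. -/
theorem ridge_weights_converge_to_scaled_optimal
    (K d : ℕ) (hK : 2 ≤ K) (hd : K ≤ d)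
    (lW ltH : ℝ) (hlW : 0 < lW) (hltH : 0 < ltH)
    (σe : ℝ)
    (Ω : Type*) [MeasurableSpace Ω] (μ : Measure Ω) [IsProbabilityMeasure μ]
    -- the infinite array of i.i.d. noise entries
    (e : Fin d × Fin K × ℕ → Ω → ℝ)
    (hmeas : ∀ p, Measurable (e p))
    (hindep : iIndepFun e μ)
    (hident : ∀ p q, IdentDistrib (e p) (e q) μ μ)
    (hmean : ∀ p, ∫ ω, e p ω ∂μ = 0)
    (hvar : ∀ p, ∫ ω, (e p ω) ^ 2 ∂μ = σe ^ 2)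
    (hmom4 : ∀ p, Integrable (fun ω => (e p ω) ^ 4) μ)
    -- a global minimizer of the UFM objective for some n₀ (with λ_H = λ̃_H/n₀)
    (n₀ : ℕ) (hn₀ : 1 ≤ n₀)
    (f : Matrix (Fin K) (Fin d) ℝ → Matrix (Fin d) (Fin K × Fin n₀) ℝ → ℝ)
    (hf : ∀ W H, f W H =
      1 / (2 * (K : ℝ) * (n₀ : ℝ)) *
          frobSq (W * H - Matrix.of (fun k (p : Fin K × Fin n₀) =>
            if p.1 = k then (1 : ℝ) else 0))
        + lW / 2 * frobSq W + (ltH / (n₀ : ℝ)) / 2 * frobSq H)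
    (Ws : Matrix (Fin K) (Fin d) ℝ) (Hs : Matrix (Fin d) (Fin K × Fin n₀) ℝ)
    (hmin : ∀ W H, f Ws Hs ≤ f W H)
    (Hbar : Matrix (Fin d) (Fin K) ℝ)
    (hHs : ∀ (j : Fin d) (k : Fin K) (i : Fin n₀), Hs j (k, i) = Hbar j k)
    -- the perturbed features H̃_n = H̄ ⊗ 1_nᵀ + E_n for every n
    (Htil : (n : ℕ) → Ω → Matrix (Fin d) (Fin K × Fin n) ℝ)
    (hHtil : ∀ n ω (j : Fin d) (k : Fin K) (i : Fin n),
      Htil n ω j (k, i) = Hbar j k + e (j, k, (i : ℕ)) ω)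
    -- the ridge objective and its minimizer Ŵ_n for every n
    (φ : (n : ℕ) → Ω → Matrix (Fin K) (Fin d) ℝ → ℝ)
    (hφ : ∀ n ω W, φ n ω W =
      1 / (2 * (K : ℝ) * (n : ℝ)) *
          frobSq (W * Htil n ω - Matrix.of (fun k (p : Fin K × Fin n) =>
            if p.1 = k then (1 : ℝ) else 0))
        + lW / 2 * frobSq W)
    (What : (n : ℕ) → Ω → Matrix (Fin K) (Fin d) ℝ)
    (hWhat : ∀ n ω W, φ n ω (What n ω) ≤ φ n ω W) :
    ∀ᵐ ω ∂μ, Tendsto (fun n => What n ω) atTop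
      (nhds ((1 / (1 + σe ^ 2 * (K : ℝ) * Real.sqrt (ltH / lW))) • Ws)) :=
  ridge_weights_converge_to_scaled_optimal_general K d hK lW ltH hlW hltH σe Ω μ e hmeas hindep
    hident hmean hvar hmom4 n₀ hn₀ f hf Ws Hs hmin Hbar hHs Htil hHtil φ hφ What hWhat
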